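/- arXiv:1210.3092 — 7 statements merged into one kernel-verified Lean document; each statement's English description precedes it below -/
import Mathlib

section
/- (Hodge decomposition) Let C', C, C'' be finite-dimensional real inner product spaces and d : C' → C, e : C → C'' linear maps with e ∘ d = 0, with adjoints d*, e* and Laplacian Δ = d ∘ d* + e* ∘ e. Then C is the internal direct sum of range d, ker Δ, and range e*, and these three subspaces are pairwise orthogonal. -/
/-!
Pairing `Δ x` with `x` gives `⟪Δ x, x⟫ = ‖d* x‖² + ‖e x‖²`, so
`ker Δ = ker d* ⊓ ker e = (range d ⊔ range e*)ᗮ`. Since `e ∘ d = 0`, `range d ⊥ range e*`, and in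
finite dimension any two orthogonal subspaces `A`, `B` split the space as `A ⊕ (A ⊔ B)ᗮ ⊕ B`.
-/

open LinearMap Submodule
open scoped Function

section OrthogonalSup

variable {𝕜 E : Type*} [RCLike 𝕜] [NormedAddCommGroup E] [InnerProductSpace 𝕜 E]

theorem Submodule.pairwise_isOrtho_orthogonal_sup {A B : Submodule 𝕜 E} (hAB : A ⟂ B) :
    Pairwise ((· ⟂ ·) on ![A, (A ⊔ B)ᗮ, B]) := by
  have hA : A ⟂ (A ⊔ B)ᗮ := (isOrtho_orthogonal_right _).mono_left le_sup_left
  have hB : B ⟂ (A ⊔ B)ᗮ := (isOrtho_orthogonal_right _).mono_left le_sup_right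
  intro i j hij
  fin_cases i <;> fin_cases j <;> simp only [Function.onFun] <;> first
    | exact absurd rfl hij
    | exact hAB | exact hAB.symm | exact hA | exact hA.symm | exact hB | exact hB.symm

theorem Submodule.isInternal_orthogonal_sup [FiniteDimensional 𝕜 E] {A B : Submodule 𝕜 E}
    (hAB : A ⟂ B) : DirectSum.IsInternal ![A, (A ⊔ B)ᗮ, B] := by
  rw [(OrthogonalFamily.of_pairwise (pairwise_isOrtho_orthogonal_sup hAB)).isInternal_iff,
    iSup_fin_three]
  simp [sup_right_comm A, sup_orthogonal_of_hasOrthogonalProjection]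

end OrthogonalSup

section Laplacian

variable {𝕜 E F G : Type*} [RCLike 𝕜]
  [NormedAddCommGroup E] [InnerProductSpace 𝕜 E] [FiniteDimensional 𝕜 E]
  [NormedAddCommGroup F] [InnerProductSpace 𝕜 F]
  [NormedAddCommGroup G] [InnerProductSpace 𝕜 G] [FiniteDimensional 𝕜 G]

theorem LinearMap.ker_adjoint_comp_self_add_adjoint_comp_self [FiniteDimensional 𝕜 F]
    (A : E →ₗ[𝕜] F) (B : E →ₗ[𝕜] G) :
    ker (adjoint A ∘ₗ A + adjoint B ∘ₗ B) = ker A ⊓ ker B := by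
  refine le_antisymm (fun x hx => ?_) (fun x ⟨hA, hB⟩ => by simp_all)
  have hnorm : ‖A x‖ ^ 2 + ‖B x‖ ^ 2 = 0 := by
    have h := congrArg (fun y => RCLike.re (inner 𝕜 x y)) (mem_ker.mp hx)
    simpa [inner_add_right, adjoint_inner_right, inner_self_eq_norm_sq] using h
  have hA : ‖A x‖ = 0 := by nlinarith [sq_nonneg ‖A x‖, sq_nonneg ‖B x‖]
  have hB : ‖B x‖ = 0 := by nlinarith [sq_nonneg ‖A x‖, sq_nonneg ‖B x‖]
  exact ⟨mem_ker.mpr (norm_eq_zero.mp hA), mem_ker.mpr (norm_eq_zero.mp hB)⟩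

theorem LinearMap.ker_laplacian [FiniteDimensional 𝕜 F] (d : F →ₗ[𝕜] E) (e : E →ₗ[𝕜] G) :
    ker (d ∘ₗ adjoint d + adjoint e ∘ₗ e) = (range d ⊔ range (adjoint e))ᗮ := by
  have h := ker_adjoint_comp_self_add_adjoint_comp_self (adjoint d) e
  rw [adjoint_adjoint] at h
  rw [h, ← inf_orthogonal, orthogonal_range, orthogonal_range, adjoint_adjoint]

theorem LinearMap.range_isOrtho_range_adjoint {d : F →ₗ[𝕜] E} {e : E →ₗ[𝕜] G}
    (hde : e ∘ₗ d = 0) : range d ⟂ range (adjoint e) := by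
  rw [isOrtho_iff_le, orthogonal_range, adjoint_adjoint]
  exact range_le_ker_iff.mpr hde

end Laplacian

/-- Hodge decomposition: For one degree of a chain complex of
finite-dimensional real inner product spaces, `d : C' → C`, `e : C → C''` with
`e ∘ d = 0` and Laplacian `Δ = d ∘ d* + e* ∘ e`, the space `C` is the internal
direct sum of `range d`, `ker Δ` and `range e*`, and these three subspaces are
pairwise orthogonal. -/
theorem stmt2 {C' C C'' : Type*}
    [NormedAddCommGroup C'] [InnerProductSpace ℝ C'] [FiniteDimensional ℝ C']
    [NormedAddCommGroup C] [InnerProductSpace ℝ C] [FiniteDimensional ℝ C]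
    [NormedAddCommGroup C''] [InnerProductSpace ℝ C''] [FiniteDimensional ℝ C'']
    (d : C' →ₗ[ℝ] C) (e : C →ₗ[ℝ] C'') (hde : e.comp d = 0) :
    DirectSum.IsInternal
      (![LinearMap.range d,
         LinearMap.ker (d ∘ₗ LinearMap.adjoint d + LinearMap.adjoint e ∘ₗ e),
         LinearMap.range (LinearMap.adjoint e)] : Fin 3 → Submodule ℝ C) ∧
    ∀ i j : Fin 3, i ≠ j →
      ∀ x ∈ (![LinearMap.range d,
         LinearMap.ker (d ∘ₗ LinearMap.adjoint d + LinearMap.adjoint e ∘ₗ e),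
         LinearMap.range (LinearMap.adjoint e)] : Fin 3 → Submodule ℝ C) i,
      ∀ y ∈ (![LinearMap.range d,
         LinearMap.ker (d ∘ₗ LinearMap.adjoint d + LinearMap.adjoint e ∘ₗ e),
         LinearMap.range (LinearMap.adjoint e)] : Fin 3 → Submodule ℝ C) j,
        (inner ℝ x y : ℝ) = 0 := by
  have hortho := range_isOrtho_range_adjoint hde
  rw [ker_laplacian]
  exact ⟨isInternal_orthogonal_sup hortho, fun i j hij _ hx _ hy =>
    (pairwise_isOrtho_orthogonal_sup hortho hij).inner_eq hx hy⟩
end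

section
/- Let C', C, C'' be finite-dimensional real inner product spaces and d : C' → C, e : C → C'' linear maps with e ∘ d = 0, with adjoints d*, e* and Laplacian Δ = d ∘ d* + e* ∘ e. Since range d ⊆ ker e, the quotient homology space H = ker e / range d is defined, and the composition of the inclusion ker Δ ↪ ker e with the quotient map ker e → ker e / range d is a linear isomorphism from ker Δ onto ker e / range d. -/
/-!
Since `⟪Δx, x⟫ = ‖d* x‖² + ‖e x‖²`, the harmonic space `ker Δ` is
`ker d* ⊓ ker e = (range d)ᗮ ⊓ ker e`. As `range d ≤ ker e`, this is an orthogonal complement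
of `range d` inside `ker e`, and any complement of `range d` in `ker e` maps isomorphically
onto `ker e / range d`.
-/

open LinearMap Submodule

namespace Submodule

variable {R M : Type*} [Ring R] [AddCommGroup M] [Module R M]

theorem bijective_mkQ_comp_inclusion_of_disjoint_of_le_sup {K W V : Submodule R M} (hWV : W ≤ V)
    (hdisj : Disjoint W K) (hsup : V ≤ W ⊔ K) :
    Function.Bijective ((K.comap V.subtype).mkQ ∘ₗ inclusion hWV) := by
  constructor
  · rw [← ker_eq_bot, ker_eq_bot']
    intro w hw
    have hwK : (w : M) ∈ K := by
      simpa using (Quotient.mk_eq_zero _).mp hw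
    exact Subtype.ext (disjoint_def.mp hdisj w w.2 hwK)
  · intro q
    obtain ⟨v, rfl⟩ := Quotient.mk_surjective _ q
    obtain ⟨w, hw, k, hk, hwk⟩ := mem_sup.mp (hsup v.2)
    refine ⟨⟨w, hw⟩, (Quotient.eq _).mpr ?_⟩
    simp [← hwk, hk]

end Submodule

namespace LinearMap

variable {𝕜 E F G : Type*} [RCLike 𝕜]
  [NormedAddCommGroup E] [InnerProductSpace 𝕜 E] [FiniteDimensional 𝕜 E]
  [NormedAddCommGroup F] [InnerProductSpace 𝕜 F] [FiniteDimensional 𝕜 F]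
  [NormedAddCommGroup G] [InnerProductSpace 𝕜 G] [FiniteDimensional 𝕜 G]

theorem re_inner_adjoint_comp_self_add_apply_self (A : E →ₗ[𝕜] F) (B : E →ₗ[𝕜] G) (x : E) :
    RCLike.re (inner 𝕜 ((adjoint A ∘ₗ A + adjoint B ∘ₗ B) x) x) = ‖A x‖ ^ 2 + ‖B x‖ ^ 2 := by
  simp [inner_add_left, adjoint_inner_left]

theorem ker_adjoint_comp_self_add (A : E →ₗ[𝕜] F) (B : E →ₗ[𝕜] G) :
    ker (adjoint A ∘ₗ A + adjoint B ∘ₗ B) = ker A ⊓ ker B := by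
  refine le_antisymm (fun x hx => ?_) (fun x ⟨hA, hB⟩ => by simp_all)
  have hsum := re_inner_adjoint_comp_self_add_apply_self A B x
  rw [mem_ker.mp hx, inner_zero_left, map_zero] at hsum
  obtain ⟨hA, hB⟩ := (add_eq_zero_iff_of_nonneg (sq_nonneg _) (sq_nonneg _)).mp hsum.symm
  exact ⟨by simpa using hA, by simpa using hB⟩

end LinearMap

/-- For one degree of a chain complex of finite-dimensional real inner
product spaces `d : C' → C`, `e : C → C''` with `e ∘ d = 0`, Laplacian
`Δ = d ∘ d* + e* ∘ e`: the kernel of `Δ` is contained in `ker e`, and the composition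
of the inclusion `ker Δ ↪ ker e` with the quotient map `ker e → ker e / range d`
is a linear isomorphism (i.e. bijective). -/
theorem stmt3 {C' C C'' : Type*}
    [NormedAddCommGroup C'] [InnerProductSpace ℝ C'] [FiniteDimensional ℝ C']
    [NormedAddCommGroup C] [InnerProductSpace ℝ C] [FiniteDimensional ℝ C]
    [NormedAddCommGroup C''] [InnerProductSpace ℝ C''] [FiniteDimensional ℝ C'']
    (d : C' →ₗ[ℝ] C) (e : C →ₗ[ℝ] C'') (hde : e.comp d = 0) :
    ∃ h : LinearMap.ker (d ∘ₗ LinearMap.adjoint d + LinearMap.adjoint e ∘ₗ e) ≤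
        LinearMap.ker e,
      Function.Bijective
        (((LinearMap.range d).comap (LinearMap.ker e).subtype).mkQ.comp
          (Submodule.inclusion h)) := by
  have hrange : range d ≤ ker e := range_le_ker_iff.mpr hde
  have hker : ker (d ∘ₗ adjoint d + adjoint e ∘ₗ e) = (range d)ᗮ ⊓ ker e := by
    have := ker_adjoint_comp_self_add (adjoint d) e
    rwa [adjoint_adjoint, ← orthogonal_range] at this
  refine ⟨hker.trans_le inf_le_right, bijective_mkQ_comp_inclusion_of_disjoint_of_le_sup _ ?_ ?_⟩
  · rw [hker]
    exact (orthogonal_disjoint _).symm.mono_left inf_le_left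
  · rw [hker, sup_comm, sup_orthogonal_inf_of_hasOrthogonalProjection hrange]
end

section
/- (Uniqueness of the interval decomposition) Let κ be a field. Suppose V is the direct sum of interval persistence modules I[r_1,∞], …, I[r_p,∞], I[m_1, m_1+n_1], …, I[m_q, m_q+n_q] and V' is the direct sum of I[r'_1,∞], …, I[r'_{p'},∞], I[m'_1, m'_1+n'_1], …, I[m'_{q'}, m'_{q'}+n'_{q'}]. If V and V' are isomorphic as persistence vector spaces, then p = p', q = q', and after suitable permutations r_i = r'_i for all i and (m_j, n_j) = (m'_j, n'_j) for all j; equivalently, the multiset of intervals {[r_i,∞]} ∪ {[m_j, m_j+n_j]} equals the multiset {[r'_i,∞]} ∪ {[m'_j, m'_j+n'_j]}. -/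
open scoped Classical

/-- A persistence vector space over a field `κ`: a family of `κ`-vector spaces `V n`
(`n ∈ ℕ`) together with linear structure maps `φ n : V n → V (n+1)`. -/
structure PersistenceVS (κ : Type) [Field κ] : Type 1 where
  V : ℕ → Type
  instAdd : ∀ n, AddCommGroup (V n)
  instMod : ∀ n, Module κ (V n)
  φ : ∀ n, V n →ₗ[κ] V (n + 1)

attribute [instance] PersistenceVS.instAdd PersistenceVS.instMod

/-- A morphism of persistence vector spaces: a family of linear maps commuting with
the structure maps. -/
structure PersistenceHom {κ : Type} [Field κ] (U W : PersistenceVS κ) where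
  ω : ∀ n, U.V n →ₗ[κ] W.V n
  comm : ∀ n, (W.φ n).comp (ω n) = (ω (n + 1)).comp (U.φ n)

/-- Two persistence vector spaces are isomorphic iff there is a morphism all of whose
components are bijective. -/
def PersistenceVS.Isomorphic {κ : Type} [Field κ] (U W : PersistenceVS κ) : Prop :=
  ∃ f : PersistenceHom U W, ∀ n, Function.Bijective (f.ω n)

/-- A persistence vector space is tame iff each component is finite dimensional and
the structure maps are isomorphisms for all sufficiently large `n`. -/
def PersistenceVS.Tame {κ : Type} [Field κ] (V : PersistenceVS κ) : Prop :=
  (∀ n, FiniteDimensional κ (V.V n)) ∧ ∃ N, ∀ n, N ≤ n → Function.Bijective (V.φ n)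

/-- The `n`-th component of the interval persistence module `I[a,b]`, realized as the
submodule `⊤` of `κ` when `a ≤ n ≤ b` and `⊥` otherwise. -/
noncomputable def intervalSub (κ : Type) [Field κ] (a : ℕ) (b : ℕ∞) (n : ℕ) :
    Submodule κ κ :=
  if a ≤ n ∧ (n : ℕ∞) ≤ b then ⊤ else ⊥

/-- The interval persistence module `I[a,b]`: component `κ` for `a ≤ n ≤ b` and `0`
otherwise, with structure maps the identity when `a ≤ n < b` and zero otherwise. -/
noncomputable def intervalModule (κ : Type) [Field κ] (a : ℕ) (b : ℕ∞) :
    PersistenceVS κ where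
  V n := ↥(intervalSub κ a b n)
  instAdd _ := inferInstance
  instMod _ := inferInstance
  φ n :=
    if h : intervalSub κ a b n ≤ intervalSub κ a b (n + 1) then Submodule.inclusion h
    else 0

/-- Direct sum (over a finite index type) of persistence vector spaces. -/
def directSumPVS {κ : Type} [Field κ] {ι : Type} [Fintype ι]
    (Vs : ι → PersistenceVS κ) : PersistenceVS κ where
  V n := ∀ k, (Vs k).V n
  instAdd _ := inferInstance
  instMod _ := inferInstance
  φ n := LinearMap.pi fun k => ((Vs k).φ n).comp (LinearMap.proj k)

/-- The composite structure map `φ_{i,j} : V i → V j` for `i ≤ j` (identity if `i = j`). -/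
noncomputable def PersistenceVS.phiLE {κ : Type} [Field κ] (V : PersistenceVS κ)
    {i j : ℕ} (h : i ≤ j) : V.V i →ₗ[κ] V.V j :=
  Nat.leRecOn h (fun {k} g => (V.φ k).comp g) LinearMap.id

/-! The rank of the composite structure map `V i → V j` (`i ≤ j`) is an isomorphism invariant,
is additive under direct sums, and on `I[a,b]` equals `1` exactly when `a ≤ i` and `j ≤ b`.
So isomorphic sums of interval modules have, for every `i ≤ j`, the same number `N(i,j)` of
summands `I[a,b]` with `a ≤ i` and `j ≤ b`, and these numbers determine the multiset of
intervals: the summands `I[a,c]` with `a ≤ i` number `N(min i c, c) - N(min i c, c + 1)`, those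
`I[a,∞]` with `a ≤ i` number `N(i, j)` for any `j ≥ i` beyond every finite right end, and
letting `i` vary isolates each left end. -/

open Function

theorem LinearMap.finrank_range_piMap {κ : Type*} [Field κ] {ι : Type*} [Fintype ι]
    {M N : ι → Type*} [∀ k, AddCommGroup (M k)] [∀ k, Module κ (M k)]
    [∀ k, AddCommGroup (N k)] [∀ k, Module κ (N k)] [∀ k, FiniteDimensional κ (N k)]
    (f : ∀ k, M k →ₗ[κ] N k) :
    Module.finrank κ (LinearMap.range (LinearMap.piMap f))
      = ∑ k, Module.finrank κ (LinearMap.range (f k)) := by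
  have hfactor : LinearMap.piMap f = LinearMap.piMap (fun k => (LinearMap.range (f k)).subtype)
      ∘ₗ LinearMap.piMap fun k => (f k).rangeRestrict := rfl
  rw [hfactor, LinearMap.range_comp_of_range_eq_top _ (LinearMap.range_eq_top.mpr
      (Surjective.piMap fun k => (f k).surjective_rangeRestrict)),
    LinearMap.finrank_range_of_inj (Injective.piMap fun k => Subtype.val_injective),
    Module.finrank_pi_fintype]

namespace PersistenceVS

variable {κ : Type} [Field κ]

theorem phiLE_refl (V : PersistenceVS κ) (i : ℕ) : V.phiLE (le_refl i) = LinearMap.id :=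
  Nat.leRecOn_self _

theorem phiLE_succ (V : PersistenceVS κ) {i j : ℕ} (h : i ≤ j) (h' : i ≤ j + 1) :
    V.phiLE h' = V.φ j ∘ₗ V.phiLE h :=
  Nat.leRecOn_succ h _

theorem phiLE_bijective (V : PersistenceVS κ) {i j : ℕ} (h : i ≤ j)
    (hφ : ∀ n, i ≤ n → n < j → Bijective (V.φ n)) : Bijective (V.phiLE h) := by
  induction j, h using Nat.le_induction with
  | base => simpa [phiLE_refl] using bijective_id
  | succ j h ih =>
    rw [phiLE_succ V h, LinearMap.coe_comp]
    exact (hφ j h j.lt_succ_self).comp (ih fun n hin hnj => hφ n hin (hnj.trans j.lt_succ_self))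

theorem _root_.PersistenceHom.comp_phiLE {U W : PersistenceVS κ} (f : PersistenceHom U W)
    {i j : ℕ} (h : i ≤ j) : f.ω j ∘ₗ U.phiLE h = W.phiLE h ∘ₗ f.ω i := by
  induction j, h using Nat.le_induction with
  | base => simp [phiLE_refl]
  | succ j h ih =>
    rw [U.phiLE_succ h, W.phiLE_succ h, ← LinearMap.comp_assoc, ← f.comm j,
      LinearMap.comp_assoc, ih, LinearMap.comp_assoc]

theorem phiLE_directSumPVS {ι : Type} [Fintype ι] (Vs : ι → PersistenceVS κ) {i j : ℕ}
    (h : i ≤ j) : (directSumPVS Vs).phiLE h = LinearMap.piMap fun k => (Vs k).phiLE h := by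
  induction j, h using Nat.le_induction with
  | base =>
    ext x
    simp only [phiLE_refl]
    rfl
  | succ j h ih =>
    rw [phiLE_succ _ h, ih]
    ext x
    simp only [phiLE_succ _ h]
    rfl

noncomputable def rankInvariant (V : PersistenceVS κ) {i j : ℕ} (h : i ≤ j) : ℕ :=
  Module.finrank κ (LinearMap.range (V.phiLE h))

theorem rankInvariant_eq_of_isomorphic {U W : PersistenceVS κ} (hUW : U.Isomorphic W)
    {i j : ℕ} (h : i ≤ j) : U.rankInvariant h = W.rankInvariant h := by
  obtain ⟨f, hf⟩ := hUW
  calc U.rankInvariant h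
      = Module.finrank κ ((LinearMap.range (U.phiLE h)).map (f.ω j)) :=
        (Submodule.equivMapOfInjective _ (hf j).1 _).finrank_eq
    _ = Module.finrank κ (LinearMap.range (W.phiLE h ∘ₗ f.ω i)) := by
        rw [← LinearMap.range_comp, f.comp_phiLE]
    _ = W.rankInvariant h := by
        rw [LinearMap.range_comp_of_range_eq_top _ (LinearMap.range_eq_top.mpr (hf i).2)]
        rfl

theorem rankInvariant_directSumPVS {ι : Type} [Fintype ι] (Vs : ι → PersistenceVS κ)
    {i j : ℕ} [∀ k, FiniteDimensional κ ((Vs k).V j)] (h : i ≤ j) :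
    (directSumPVS Vs).rankInvariant h = ∑ k, (Vs k).rankInvariant h := by
  rw [rankInvariant, phiLE_directSumPVS]
  exact LinearMap.finrank_range_piMap fun k => (Vs k).phiLE h

end PersistenceVS

section IntervalModule

variable {κ : Type} [Field κ]

instance (a : ℕ) (b : ℕ∞) (n : ℕ) : FiniteDimensional κ ((intervalModule κ a b).V n) :=
  inferInstanceAs (FiniteDimensional κ (intervalSub κ a b n))

theorem finrank_intervalModule (a : ℕ) (b : ℕ∞) (n : ℕ) :
    Module.finrank κ ((intervalModule κ a b).V n) = if a ≤ n ∧ (n : ℕ∞) ≤ b then 1 else 0 := by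
  change Module.finrank κ (intervalSub κ a b n) = _
  by_cases hn : a ≤ n ∧ (n : ℕ∞) ≤ b
  · rw [intervalSub, if_pos hn, if_pos hn, finrank_top, Module.finrank_self]
  · rw [intervalSub, if_neg hn, if_neg hn, finrank_bot]

theorem intervalModule_φ_bijective {a : ℕ} {b : ℕ∞} {n : ℕ} (ha : a ≤ n)
    (hb : ((n + 1 : ℕ) : ℕ∞) ≤ b) : Bijective ((intervalModule κ a b).φ n) := by
  have hn : intervalSub κ a b n = ⊤ := if_pos ⟨ha, le_trans (by simp) hb⟩
  have hn1 : intervalSub κ a b (n + 1) = ⊤ := if_pos ⟨ha.trans n.le_succ, hb⟩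
  have hle : intervalSub κ a b n ≤ intervalSub κ a b (n + 1) := by rw [hn, hn1]
  have hφ : (intervalModule κ a b).φ n = Submodule.inclusion hle := dif_pos hle
  rw [hφ]
  exact ⟨Submodule.inclusion_injective hle, fun ⟨y, _⟩ => ⟨⟨y, hn ▸ trivial⟩, rfl⟩⟩

theorem rankInvariant_intervalModule (a : ℕ) (b : ℕ∞) {i j : ℕ} (h : i ≤ j) :
    (intervalModule κ a b).rankInvariant h = if a ≤ i ∧ (j : ℕ∞) ≤ b then 1 else 0 := by
  split_ifs with hij
  · have hbij := (intervalModule κ a b).phiLE_bijective h fun n hin hnj =>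
      intervalModule_φ_bijective (hij.1.trans hin) (le_trans (by exact_mod_cast hnj) hij.2)
    rw [PersistenceVS.rankInvariant, LinearMap.range_eq_top.mpr hbij.2, finrank_top,
      finrank_intervalModule, if_pos ⟨hij.1.trans h, hij.2⟩]
  · have hzero : Module.finrank κ ((intervalModule κ a b).V i) = 0 ∨
        Module.finrank κ ((intervalModule κ a b).V j) = 0 := by
      simp only [finrank_intervalModule]
      grind
    apply Nat.eq_zero_of_le_zero
    rcases hzero with hi | hj
    · exact hi ▸ LinearMap.finrank_range_le _
    · exact hj ▸ Submodule.finrank_le _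

end IntervalModule

namespace Multiset

theorem map_univ_sumElim {α β γ : Type*} [Fintype α] [Fintype β] (f : α → γ) (g : β → γ) :
    (Finset.univ : Finset (α ⊕ β)).val.map (Sum.elim f g)
      = Finset.univ.val.map f + Finset.univ.val.map g := by
  rw [← Finset.univ_disjSum_univ, Finset.val_disjSum, disjSum, map_add, map_map, map_map]
  rfl

theorem countP_eq_countP_and_add_countP_and_not {α : Type*} (p q : α → Prop) [DecidablePred p]
    [DecidablePred q] (s : Multiset α) :
    s.countP p = s.countP (fun a => p a ∧ q a) + s.countP (fun a => p a ∧ ¬q a) := by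
  rw [countP_eq_countP_filter_add s p q, countP_filter, countP_filter]

theorem eq_of_countP_fst_le_and_snd_eq {β : Type*} [DecidableEq β] {M M' : Multiset (ℕ × β)}
    (h : ∀ i b, M.countP (fun s => s.1 ≤ i ∧ s.2 = b) = M'.countP (fun s => s.1 ≤ i ∧ s.2 = b)) :
    M = M' := by
  ext ⟨a, b⟩
  have hsplit (N : Multiset (ℕ × β)) : N.countP (fun s => s.1 ≤ a ∧ s.2 = b)
      = N.count (a, b) + N.countP (fun s => s.1 < a ∧ s.2 = b) := by
    rw [countP_eq_countP_and_add_countP_and_not _ (fun s => s.1 = a), count]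
    congr 1 <;> exact countP_congr rfl fun s _ => propext (by grind)
  have hlt : M.countP (fun s => s.1 < a ∧ s.2 = b) = M'.countP (fun s => s.1 < a ∧ s.2 = b) := by
    cases a with
    | zero => simp
    | succ k => simpa only [Nat.lt_succ_iff] using h k b
  have := h a b
  rw [hsplit, hsplit] at this
  omega

theorem countP_fst_le_and_coe_le_snd (N : Multiset (ℕ × ℕ∞)) (i c : ℕ) :
    N.countP (fun s => s.1 ≤ i ∧ (c : ℕ∞) ≤ s.2)
      = N.countP (fun s => s.1 ≤ i ∧ ((c + 1 : ℕ) : ℕ∞) ≤ s.2)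
        + N.countP (fun s => s.1 ≤ i ∧ s.2 = (c : ℕ∞)) := by
  rw [countP_eq_countP_and_add_countP_and_not _ (fun s => ((c + 1 : ℕ) : ℕ∞) ≤ s.2)]
  congr 1 <;> refine countP_congr rfl fun ⟨a, b⟩ _ => propext ?_ <;>
    induction b using ENat.recTopCoe <;> simp <;> norm_cast <;> omega

theorem countP_fst_le_and_snd_eq_coe_min {N : Multiset (ℕ × ℕ∞)}
    (hN : ∀ s ∈ N, (s.1 : ℕ∞) ≤ s.2) (i c : ℕ) :
    N.countP (fun s => s.1 ≤ i ∧ s.2 = (c : ℕ∞))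
      = N.countP (fun s => s.1 ≤ min i c ∧ s.2 = (c : ℕ∞)) := by
  refine countP_congr rfl fun s hs => propext ⟨fun ⟨hi, hc⟩ => ⟨le_min hi ?_, hc⟩,
    fun ⟨hi, hc⟩ => ⟨hi.trans (min_le_left i c), hc⟩⟩
  exact_mod_cast hc ▸ hN s hs

theorem countP_fst_le_and_snd_eq_top {N : Multiset (ℕ × ℕ∞)} {j : ℕ}
    (hN : ∀ s ∈ N, s.2 ≠ ⊤ → s.2 < j) (i : ℕ) :
    N.countP (fun s => s.1 ≤ i ∧ s.2 = ⊤) = N.countP (fun s => s.1 ≤ i ∧ (j : ℕ∞) ≤ s.2) :=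
  countP_congr rfl fun s hs => propext ⟨fun ⟨hi, htop⟩ => ⟨hi, htop ▸ le_top⟩,
    fun ⟨hi, hj⟩ => ⟨hi, by_contra fun htop => (hN s hs htop).not_ge hj⟩⟩

theorem exists_forall_snd_lt_of_ne_top (N : Multiset (ℕ × ℕ∞)) :
    ∃ B : ℕ, ∀ s ∈ N, s.2 ≠ ⊤ → s.2 < B := by
  refine ⟨(N.map fun s => s.2.toNat).sup + 1, fun s hs htop => ?_⟩
  rw [← ENat.natCast_toNat htop]
  exact_mod_cast Nat.lt_succ_of_le (le_sup (mem_map_of_mem (fun s => s.2.toNat) hs))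

theorem eq_of_countP_contains_eq {M M' : Multiset (ℕ × ℕ∞)}
    (hM : ∀ s ∈ M, (s.1 : ℕ∞) ≤ s.2) (hM' : ∀ s ∈ M', (s.1 : ℕ∞) ≤ s.2)
    (h : ∀ i j : ℕ, i ≤ j → M.countP (fun s => s.1 ≤ i ∧ (j : ℕ∞) ≤ s.2)
      = M'.countP (fun s => s.1 ≤ i ∧ (j : ℕ∞) ≤ s.2)) : M = M' := by
  refine eq_of_countP_fst_le_and_snd_eq fun i b => ?_
  induction b using ENat.recTopCoe with
  | top =>
    obtain ⟨B, hB⟩ := (M + M').exists_forall_snd_lt_of_ne_top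
    have hB' (s) (hs : s ∈ M + M') (htop : s.2 ≠ ⊤) : s.2 < (max i B : ℕ) :=
      (hB s hs htop).trans_le (by exact_mod_cast le_max_right i B)
    rw [countP_fst_le_and_snd_eq_top fun s hs => hB' s (mem_add.mpr (.inl hs)),
      countP_fst_le_and_snd_eq_top fun s hs => hB' s (mem_add.mpr (.inr hs))]
    exact h i _ (le_max_left i B)
  | coe c =>
    have hc := h (min i c) c (min_le_right i c)
    have hc1 := h (min i c) (c + 1) ((min_le_right i c).trans c.le_succ)
    rw [countP_fst_le_and_snd_eq_coe_min hM, countP_fst_le_and_snd_eq_coe_min hM']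
    rw [countP_fst_le_and_coe_le_snd, countP_fst_le_and_coe_le_snd M'] at hc
    omega

end Multiset

theorem rankInvariant_directSumPVS_intervalModule {κ : Type} [Field κ] {ι : Type} [Fintype ι]
    {Vs : ι → PersistenceVS κ} (e : ι → ℕ × ℕ∞)
    (hVs : ∀ k, Vs k = intervalModule κ (e k).1 (e k).2) {i j : ℕ} (h : i ≤ j) :
    (directSumPVS Vs).rankInvariant h
      = (Finset.univ.val.map e).countP fun s => s.1 ≤ i ∧ (j : ℕ∞) ≤ s.2 := by
  obtain rfl : Vs = _ := funext hVs
  rw [PersistenceVS.rankInvariant_directSumPVS, Multiset.countP_map, ← Finset.filter_val,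
    Finset.card_val, Finset.card_filter]
  exact Finset.sum_congr rfl fun k _ => rankInvariant_intervalModule _ _ h

/-- uniqueness of the interval decomposition: If two finite direct sums
of interval modules are isomorphic as persistence vector spaces, then the multisets of
intervals (recorded as pairs `(left end, right end)` in `ℕ × ℕ∞`) coincide; in
particular `p = p'`, `q = q'` and the interval data agree up to permutation. -/
theorem stmt11 {κ : Type} [Field κ] (p q p' q' : ℕ)
    (r : Fin p → ℕ) (m n : Fin q → ℕ) (r' : Fin p' → ℕ) (m' n' : Fin q' → ℕ)
    (hiso :
      (directSumPVS (Sum.elim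
        (fun i : Fin p => intervalModule κ (r i) ⊤)
        (fun j : Fin q => intervalModule κ (m j) ((m j + n j : ℕ) : ℕ∞)))).Isomorphic
      (directSumPVS (Sum.elim
        (fun i : Fin p' => intervalModule κ (r' i) ⊤)
        (fun j : Fin q' => intervalModule κ (m' j) ((m' j + n' j : ℕ) : ℕ∞))))) :
    (Finset.univ.val.map fun i : Fin p => ((r i : ℕ), (⊤ : ℕ∞))) +
      (Finset.univ.val.map fun j : Fin q => ((m j : ℕ), ((m j + n j : ℕ) : ℕ∞))) =
    (Finset.univ.val.map fun i : Fin p' => ((r' i : ℕ), (⊤ : ℕ∞))) +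
      (Finset.univ.val.map fun j : Fin q' => ((m' j : ℕ), ((m' j + n' j : ℕ) : ℕ∞))) := by
  rw [← Multiset.map_univ_sumElim, ← Multiset.map_univ_sumElim]
  refine Multiset.eq_of_countP_contains_eq ?_ ?_ fun i j h => ?_
  · exact Multiset.forall_mem_map_iff.mpr fun k _ => by cases k <;> simp
  · exact Multiset.forall_mem_map_iff.mpr fun k _ => by cases k <;> simp
  calc _ = _ := (rankInvariant_directSumPVS_intervalModule _ (fun k => by cases k <;> rfl) h).symm
    _ = _ := PersistenceVS.rankInvariant_eq_of_isomorphic hiso h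
    _ = _ := rankInvariant_directSumPVS_intervalModule _ (fun k => by cases k <;> rfl) h
end

section
/- Let κ be a field and R = κ[X] the polynomial ring. Let M be an R-module equipped with a grading by κ-subspaces M = ⊕_{n∈ℕ} M_n such that X • M_n ⊆ M_{n+1} for all n. If M is finitely generated as an R-module, then every M_n is a finite-dimensional κ-vector space and there exists N ∈ ℕ such that for all n ≥ N the map M_n → M_{n+1}, m ↦ X • m, is bijective (i.e., the associated persistence vector space {M_n, X•} is tame). -/
/-! Splitting a finite generating set into homogeneous components gives finitely many homogeneous
generators `gᵢ` of degrees `dᵢ`. Comparing degree-`n` components in `m = ∑ pᵢ • gᵢ` shows that `Mₙ`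
is spanned over `κ` by the `X ^ (n - dᵢ) • gᵢ` with `dᵢ ≤ n`. Hence every `Mₙ` is finite dimensional,
and once `n ≥ max dᵢ` each of these spanning vectors of `Mₙ₊₁` is `X` times one of `Mₙ`, so
`X • : Mₙ → Mₙ₊₁` is onto. The dimensions are then eventually non-increasing, hence eventually
constant, and a surjection between spaces of the same finite dimension is bijective. -/

open Polynomial DirectSum Submodule

section PersistenceModule

variable {K : Type*} [DivisionRing K] {V : ℕ → Type*} [∀ n, AddCommGroup (V n)]
  [∀ n, Module K (V n)] [∀ n, FiniteDimensional K (V n)]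

theorem exists_bijective_of_eventually_surjective (f : ∀ n, V n →ₗ[K] V (n + 1)) {N : ℕ}
    (hf : ∀ n, N ≤ n → Function.Surjective (f n)) :
    ∃ N', ∀ n, N' ≤ n → Function.Bijective (f n) := by
  have hanti : Antitone fun k => Module.finrank K (V (N + k)) := antitone_nat_of_succ_le
    fun k => LinearMap.finrank_le_finrank_of_surjective (hf (N + k) (Nat.le_add_right _ _))
  obtain ⟨k₀, hk₀⟩ := WellFoundedLT.antitone_chain_condition hanti
  refine ⟨N + k₀, fun n hn => ?_⟩
  obtain ⟨k, rfl⟩ := Nat.exists_eq_add_of_le ((Nat.le_add_right N k₀).trans hn)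
  have hsurj := hf (N + k) (Nat.le_add_right _ _)
  have hrank : Module.finrank K (V (N + k)) = Module.finrank K (V (N + k + 1)) :=
    (hk₀ k (by omega)).symm.trans (hk₀ (k + 1) (by omega))
  exact ⟨(LinearMap.injective_iff_surjective_of_finrank_eq_finrank hrank).2 hsurj, hsurj⟩

end PersistenceModule

section GradedModule

variable {κ M : Type*} [CommSemiring κ] [AddCommMonoid M] [Module κ M] [Module κ[X] M]
  {Mn : ℕ → Submodule κ M}

theorem exists_homogeneous_generators [Decomposition Mn] [Module.Finite κ[X] M] :
    ∃ s : Finset (ℕ × M), (∀ p ∈ s, p.2 ∈ Mn p.1) ∧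
      span κ[X] (Prod.snd '' (s : Set (ℕ × M))) = ⊤ := by
  classical
  obtain ⟨S, hS⟩ := Module.Finite.fg_top (R := κ[X]) (M := M)
  refine ⟨S.biUnion fun g => (decompose Mn g).support.image fun n => (n, (decompose Mn g n : M)),
    ?_, ?_⟩
  · simp only [Finset.mem_biUnion, Finset.mem_image]
    rintro _ ⟨g, -, n, -, rfl⟩
    exact (decompose Mn g n).2
  · rw [eq_top_iff, ← hS, span_le]
    intro g hg
    rw [← sum_support_decompose Mn g]
    refine sum_mem fun n hn => subset_span ⟨(n, _), ?_, rfl⟩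
    simp only [Finset.coe_biUnion, Finset.coe_image, Set.mem_iUnion, Set.mem_image]
    exact ⟨g, hg, n, hn, rfl⟩

variable (κ) in
def shiftedGenerators (s : Finset (ℕ × M)) (n : ℕ) : Set M :=
  (fun p : ℕ × M => (X : κ[X]) ^ (n - p.1) • p.2) '' {p | p ∈ s ∧ p.1 ≤ n}

variable (hX : ∀ n, ∀ m ∈ Mn n, (X : κ[X]) • m ∈ Mn (n + 1))

include hX in
theorem X_pow_smul_mem (k : ℕ) {d : ℕ} {m : M} (hm : m ∈ Mn d) :
    (X : κ[X]) ^ k • m ∈ Mn (d + k) := by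
  induction k with
  | zero => simpa using hm
  | succ k ih => simpa only [pow_succ', mul_smul, ← add_assoc] using hX _ _ ih

variable [IsScalarTower κ κ[X] M]

noncomputable def mulX (n : ℕ) : Mn n →ₗ[κ] Mn (n + 1) :=
  (DistribSMul.toLinearMap κ M (X : κ[X])).restrict (hX n)

variable [Decomposition Mn]
include hX

theorem decompose_smul_mem_span (p : κ[X]) {d : ℕ} {g : M} (hg : g ∈ Mn d) (n : ℕ) :
    (decompose Mn (p • g) n : M) ∈ span κ ((fun k => (X : κ[X]) ^ k • g) '' {k | d + k = n}) := by
  induction p using Polynomial.induction_on' with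
  | add p q hp hq =>
    rw [add_smul, decompose_add, DirectSum.add_apply, Submodule.coe_add]
    exact add_mem hp hq
  | monomial k c =>
    have hXk : (X : κ[X]) ^ k • g ∈ Mn (d + k) := X_pow_smul_mem hX k hg
    rw [← C_mul_X_pow_eq_monomial, mul_smul, C_eq_algebraMap, algebraMap_smul, decompose_smul,
      DirectSum.smul_apply, Submodule.coe_smul]
    by_cases hk : d + k = n
    · subst hk
      rw [decompose_of_mem_same Mn hXk]
      exact smul_mem _ c (subset_span ⟨k, rfl, rfl⟩)
    · rw [decompose_of_mem_ne Mn hXk hk, smul_zero]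
      exact zero_mem _

variable {s : Finset (ℕ × M)} (hs : ∀ p ∈ s, p.2 ∈ Mn p.1)
  (hspan : span κ[X] (Prod.snd '' (s : Set (ℕ × M))) = ⊤)
include hs hspan

theorem eq_span_shiftedGenerators (n : ℕ) : Mn n = span κ (shiftedGenerators κ s n) := by
  apply le_antisymm
  · intro m hm
    obtain ⟨c, rfl⟩ := (mem_span_image_finset_iff_exists_fun' κ[X]).1 (hspan ▸ mem_top : m ∈ _)
    rw [← decompose_of_mem_same Mn hm, decompose_sum, DFinsupp.finsetSum_apply,
      Submodule.coe_sum]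
    refine sum_mem fun p hp => span_mono ?_ (decompose_smul_mem_span hX (c p) (hs p hp) n)
    rintro _ ⟨k, rfl : p.1 + k = n, rfl⟩
    exact ⟨p, ⟨hp, Nat.le_add_right _ _⟩, by simp only [Nat.add_sub_cancel_left]⟩
  · rw [span_le]
    rintro _ ⟨p, ⟨hp, hle⟩, rfl⟩
    have := X_pow_smul_mem hX (n - p.1) (hs p hp)
    rwa [Nat.add_sub_cancel' hle] at this

theorem finite_of_homogeneous_generators (n : ℕ) : Module.Finite κ (Mn n) := by
  rw [eq_span_shiftedGenerators hX hs hspan n]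
  exact Module.Finite.span_of_finite κ ((s.finite_toSet.subset fun _ hp => hp.1).image _)

theorem mulX_surjective {n : ℕ} (hn : ∀ p ∈ s, p.1 ≤ n) : Function.Surjective (mulX hX n) := by
  rintro ⟨y, hy⟩
  suffices h : y ∈ (Mn n).map (DistribSMul.toLinearMap κ M (X : κ[X])) by
    obtain ⟨x, hx, rfl⟩ := h
    exact ⟨⟨x, hx⟩, rfl⟩
  rw [eq_span_shiftedGenerators hX hs hspan] at hy
  refine span_le.2 ?_ hy
  rintro _ ⟨p, ⟨hp, -⟩, rfl⟩
  refine ⟨(X : κ[X]) ^ (n - p.1) • p.2, ?_, ?_⟩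
  · rw [eq_span_shiftedGenerators hX hs hspan]
    exact subset_span ⟨p, ⟨hp, hn p hp⟩, rfl⟩
  · change (X : κ[X]) • (X : κ[X]) ^ (n - p.1) • p.2 = (X : κ[X]) ^ (n + 1 - p.1) • p.2
    rw [← mul_smul, ← pow_succ', Nat.sub_add_comm (hn p hp)]

end GradedModule

/-- If `M` is a `κ[X]`-module equipped with a grading by `κ`-subspaces
`M = ⊕ₙ Mₙ` with `X • Mₙ ⊆ Mₙ₊₁`, and `M` is finitely generated over `κ[X]`, then each
`Mₙ` is finite dimensional over `κ` and multiplication by `X`, `Mₙ → Mₙ₊₁`, is bijective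
for all sufficiently large `n` (i.e. the associated persistence vector space is tame). -/
theorem stmt15 {κ M : Type*} [Field κ] [AddCommGroup M]
    [Module κ M] [Module (Polynomial κ) M] [IsScalarTower κ (Polynomial κ) M]
    (Mn : ℕ → Submodule κ M)
    (hinternal : DirectSum.IsInternal Mn)
    (hX : ∀ n, ∀ m ∈ Mn n, (Polynomial.X : Polynomial κ) • m ∈ Mn (n + 1))
    (hfg : Module.Finite (Polynomial κ) M) :
    (∀ n, FiniteDimensional κ (Mn n)) ∧
      ∃ N, ∀ n, N ≤ n →
        Function.Bijective (fun m : Mn n =>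
          (⟨(Polynomial.X : Polynomial κ) • (m : M), hX n m.1 m.2⟩ : Mn (n + 1))) := by
  let := hinternal.chooseDecomposition
  obtain ⟨s, hs, hspan⟩ := exists_homogeneous_generators (Mn := Mn)
  have hfin := finite_of_homogeneous_generators hX hs hspan
  exact ⟨hfin, exists_bijective_of_eventually_surjective (mulX hX) fun n hn =>
    mulX_surjective hX hs hspan fun p hp => (Finset.le_sup (f := Prod.fst) hp).trans hn⟩
end

section
/- Let C', C, C'' and D', D, D'' be finite-dimensional real inner product spaces with linear maps d_C : C' → C, e_C : C → C'' satisfying e_C ∘ d_C = 0 and d_D : D' → D, e_D : D → D'' satisfying e_D ∘ d_D = 0. Let f' : C' → D', f : C → D, f'' : C'' → D'' be linear maps with f ∘ d_C = d_D ∘ f' and f'' ∘ e_C = e_D ∘ f (a chain map). Let Δ_C = d_C ∘ d_C* + e_C* ∘ e_C and Δ_D = d_D ∘ d_D* + e_D* ∘ e_D be the Laplacians, and let P_C : C → C and P_D : D → D be the orthogonal projections onto ker Δ_C and ker Δ_D respectively. Then the rank of the induced map on homology, ker e_C / range d_C → ker e_D / range d_D, [x] ↦ [f x], equals the rank of the linear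 map P_D ∘ f ∘ P_C : C → D. -/
/-!
The harmonic space `H = (range d)ᗮ ⊓ ker e = ker Δ` is an orthogonal complement of `range d` in
`ker e`, so the quotient map `H → ker e ⧸ range d` is an isomorphism. For harmonic `x`, the vector
`f x` lies in `ker e_D = range d_D ⊕ H_D`, and its harmonic component `P_D (f x)` represents the
same homology class. Under these isomorphisms the map on homology therefore becomes
`P_D ∘ f : H_C → H_D`, whose rank is that of `P_D ∘ f ∘ P_C` because `P_C` maps onto `H_C`.
-/

namespace LinearMap

section

variable {R M M' N N' : Type*} [Ring R] [AddCommGroup M] [Module R M] [AddCommGroup M']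
  [Module R M'] [AddCommGroup N] [Module R N] [AddCommGroup N'] [Module R N']

theorem finrank_range_comp_comp {i : N →ₗ[R] N'} {p : M' →ₗ[R] M} (hi : Function.Injective i)
    (hp : Function.Surjective p) (φ : M →ₗ[R] N) :
    Module.finrank R (range (i ∘ₗ φ ∘ₗ p)) = Module.finrank R (range φ) := by
  rw [range_comp, range_comp_of_range_eq_top _ (range_eq_top.mpr hp)]
  exact (Submodule.equivMapOfInjective i hi _).finrank_eq.symm

end

section

variable {𝕜 E F G : Type*} [RCLike 𝕜]
  [NormedAddCommGroup E] [InnerProductSpace 𝕜 E] [FiniteDimensional 𝕜 E]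
  [NormedAddCommGroup F] [InnerProductSpace 𝕜 F] [FiniteDimensional 𝕜 F]
  [NormedAddCommGroup G] [InnerProductSpace 𝕜 G] [FiniteDimensional 𝕜 G]

theorem ker_adjoint_comp_self_add_adjoint_comp_self_s16 (S : E →ₗ[𝕜] F) (T : E →ₗ[𝕜] G) :
    ker (S.adjoint ∘ₗ S + T.adjoint ∘ₗ T) = ker S ⊓ ker T := by
  refine le_antisymm (fun x hx => ?_) fun x ⟨hS, hT⟩ => by simp_all
  have hnorm : ((‖S x‖ ^ 2 + ‖T x‖ ^ 2 : ℝ) : 𝕜) = 0 := by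
    simpa [inner_add_right, adjoint_inner_right, inner_self_eq_norm_sq_to_K] using
      congrArg (inner 𝕜 x) (mem_ker.mp hx)
  have hzero := (add_eq_zero_iff_of_nonneg (by positivity) (by positivity)).mp
    (RCLike.ofReal_eq_zero.mp hnorm)
  simp_all

theorem ker_laplacian_s16 (d : E →ₗ[𝕜] F) (e : F →ₗ[𝕜] G) :
    ker (d ∘ₗ d.adjoint + e.adjoint ∘ₗ e) = (range d)ᗮ ⊓ ker e := by
  simpa only [adjoint_adjoint, ← orthogonal_range] using
    ker_adjoint_comp_self_add_adjoint_comp_self_s16 d.adjoint e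

end

end LinearMap

namespace Submodule

variable {𝕜 E : Type*} [RCLike 𝕜] [NormedAddCommGroup E] [InnerProductSpace 𝕜 E]
  {R K : Submodule 𝕜 E}

theorem exists_mem_orthogonal_inf_sub_mem [R.HasOrthogonalProjection] (hRK : R ≤ K) {y : E}
    (hy : y ∈ K) : ∃ h ∈ Rᗮ ⊓ K, y - h ∈ R := by
  rw [← sup_orthogonal_inf_of_hasOrthogonalProjection hRK] at hy
  obtain ⟨r, hr, h, hh, rfl⟩ := mem_sup.mp hy
  exact ⟨h, hh, by simpa using hr⟩

theorem sub_orthogonalProjectionOnto_orthogonal_inf_mem [R.HasOrthogonalProjection]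
    [(Rᗮ ⊓ K).HasOrthogonalProjection] (hRK : R ≤ K) {y : E} (hy : y ∈ K) :
    y - (Rᗮ ⊓ K).orthogonalProjectionOnto y ∈ R := by
  obtain ⟨h, hh, hyh⟩ := exists_mem_orthogonal_inf_sub_mem hRK hy
  have hR : R ≤ (Rᗮ ⊓ K)ᗮ := (le_orthogonal_orthogonal R).trans (orthogonal_le inf_le_left)
  have hproj : ((Rᗮ ⊓ K).orthogonalProjectionOnto y : E) = h := by
    rw [← sub_add_cancel y h, map_add, orthogonalProjectionOnto_apply_of_mem_orthogonal (hR hyh),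
      zero_add, orthogonalProjectionOnto_mem_subspace_eq_self ⟨h, hh⟩]
  rwa [hproj]

variable (R K) in
def harmonicToHomology : ↥(Rᗮ ⊓ K) →ₗ[𝕜] K ⧸ R.comap K.subtype :=
  (R.comap K.subtype).mkQ ∘ₗ inclusion inf_le_right

theorem harmonicToHomology_injective : Function.Injective (harmonicToHomology R K) := by
  rw [← LinearMap.ker_eq_bot, eq_bot_iff]
  rintro ⟨x, hx_orth, _⟩ hx
  have hxR : x ∈ R := by simpa [harmonicToHomology] using hx
  exact Subtype.ext (inner_self_eq_zero.mp (hx_orth x hxR))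

theorem harmonicToHomology_surjective [R.HasOrthogonalProjection] (hRK : R ≤ K) :
    Function.Surjective (harmonicToHomology R K) := by
  rintro ⟨y, hy⟩
  obtain ⟨h, hh, hyh⟩ := exists_mem_orthogonal_inf_sub_mem hRK hy
  exact ⟨⟨h, hh⟩, (Quotient.eq _).mpr (sub_mem_comm_iff.mp hyh)⟩

theorem harmonicToHomology_orthogonalProjectionOnto [R.HasOrthogonalProjection]
    [(Rᗮ ⊓ K).HasOrthogonalProjection] (hRK : R ≤ K) {y : E} (hy : y ∈ K) :
    harmonicToHomology R K ((Rᗮ ⊓ K).orthogonalProjectionOnto y) =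
      (R.comap K.subtype).mkQ ⟨y, hy⟩ :=
  (Quotient.eq _).mpr (sub_mem_comm_iff.mp (sub_orthogonalProjectionOnto_orthogonal_inf_mem hRK hy))


variable (R K) in
noncomputable def harmonicEquivHomology [R.HasOrthogonalProjection] (hRK : R ≤ K) :
    ↥(Rᗮ ⊓ K) ≃ₗ[𝕜] K ⧸ R.comap K.subtype :=
  .ofBijective (harmonicToHomology R K)
    ⟨harmonicToHomology_injective, harmonicToHomology_surjective hRK⟩

theorem harmonicEquivHomology_apply [R.HasOrthogonalProjection] (hRK : R ≤ K) (x : ↥(Rᗮ ⊓ K)) :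
    harmonicEquivHomology R K hRK x = harmonicToHomology R K x :=
  rfl

end Submodule

open Submodule LinearMap in
theorem finrank_range_mapQ_eq_finrank_range_orthogonalProjectionOnto
    {𝕜 E F : Type*} [RCLike 𝕜] [NormedAddCommGroup E] [InnerProductSpace 𝕜 E]
    [NormedAddCommGroup F] [InnerProductSpace 𝕜 F]
    {R₁ K₁ H₁ : Submodule 𝕜 E} {R₂ K₂ H₂ : Submodule 𝕜 F}
    [R₁.HasOrthogonalProjection] [H₁.HasOrthogonalProjection]
    [R₂.HasOrthogonalProjection] [H₂.HasOrthogonalProjection]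
    (hRK₁ : R₁ ≤ K₁) (hRK₂ : R₂ ≤ K₂) (hH₁ : H₁ = R₁ᗮ ⊓ K₁) (hH₂ : H₂ = R₂ᗮ ⊓ K₂)
    (f : E →ₗ[𝕜] F) (hK : K₁ ≤ K₂.comap f)
    (hR : R₁.comap K₁.subtype ≤
      (R₂.comap K₂.subtype).comap (codRestrict K₂ (f ∘ₗ K₁.subtype) fun x => hK x.2)) :
    Module.finrank 𝕜 (range (mapQ (R₁.comap K₁.subtype) (R₂.comap K₂.subtype)
      (codRestrict K₂ (f ∘ₗ K₁.subtype) fun x => hK x.2) hR)) =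
    Module.finrank 𝕜 (range ((H₂.subtype ∘ₗ H₂.orthogonalProjectionOnto.toLinearMap) ∘ₗ f ∘ₗ
      (H₁.subtype ∘ₗ H₁.orthogonalProjectionOnto.toLinearMap))) := by
  subst hH₁ hH₂
  let e₁ := harmonicEquivHomology R₁ K₁ hRK₁
  let e₂ := harmonicEquivHomology R₂ K₂ hRK₂
  have hcomm : e₂.symm.toLinearMap ∘ₗ mapQ _ _ _ hR ∘ₗ e₁.toLinearMap =
      (R₂ᗮ ⊓ K₂).orthogonalProjectionOnto.toLinearMap ∘ₗ f ∘ₗ (R₁ᗮ ⊓ K₁).subtype := by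
    refine LinearMap.ext fun x => e₂.injective ?_
    rw [LinearMap.comp_apply, LinearEquiv.coe_coe, LinearEquiv.apply_symm_apply]
    simp only [e₁, e₂, comp_apply, ContinuousLinearMap.coe_coe, LinearEquiv.coe_coe, coe_subtype,
      harmonicEquivHomology_apply, harmonicToHomology_orthogonalProjectionOnto hRK₂ (hK x.2.2)]
    rfl
  calc _ = Module.finrank 𝕜 (range (e₂.symm.toLinearMap ∘ₗ mapQ _ _ _ hR ∘ₗ e₁.toLinearMap)) :=
        (finrank_range_comp_comp e₂.symm.injective e₁.surjective _).symm
    _ = _ := by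
        rw [hcomm, ← finrank_range_comp_comp (injective_subtype _)
          (p := (R₁ᗮ ⊓ K₁).orthogonalProjectionOnto.toLinearMap)
          (fun x => ⟨x, orthogonalProjectionOnto_mem_subspace_eq_self x⟩)]
        simp only [comp_assoc]

/-- For a chain map `(f', f, f'')` between two-step complexes of
finite-dimensional real inner product spaces (`e_C ∘ d_C = 0`, `e_D ∘ d_D = 0`),
`f` maps `ker e_C` into `ker e_D` and `range d_C` into `range d_D`, and the rank of the
induced map on homology `ker e_C / range d_C → ker e_D / range d_D` equals the rank of
`P_D ∘ f ∘ P_C`, where `P_C`, `P_D` are the orthogonal projections onto the kernels of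
the Laplacians `Δ_C = d_C ∘ d_C* + e_C* ∘ e_C` and `Δ_D = d_D ∘ d_D* + e_D* ∘ e_D`. -/
theorem stmt16 {C' C C'' D' D D'' : Type*}
    [NormedAddCommGroup C'] [InnerProductSpace ℝ C'] [FiniteDimensional ℝ C']
    [NormedAddCommGroup C] [InnerProductSpace ℝ C] [FiniteDimensional ℝ C]
    [NormedAddCommGroup C''] [InnerProductSpace ℝ C''] [FiniteDimensional ℝ C'']
    [NormedAddCommGroup D'] [InnerProductSpace ℝ D'] [FiniteDimensional ℝ D']
    [NormedAddCommGroup D] [InnerProductSpace ℝ D] [FiniteDimensional ℝ D]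
    [NormedAddCommGroup D''] [InnerProductSpace ℝ D''] [FiniteDimensional ℝ D'']
    (dC : C' →ₗ[ℝ] C) (eC : C →ₗ[ℝ] C'') (hC : eC.comp dC = 0)
    (dD : D' →ₗ[ℝ] D) (eD : D →ₗ[ℝ] D'') (hD : eD.comp dD = 0)
    (f' : C' →ₗ[ℝ] D') (f : C →ₗ[ℝ] D) (f'' : C'' →ₗ[ℝ] D'')
    (hfd : f.comp dC = dD.comp f') (hfe : f''.comp eC = eD.comp f) :
    ∃ hker : LinearMap.ker eC ≤ (LinearMap.ker eD).comap f,
      ∃ hcomap : (LinearMap.range dC).comap (LinearMap.ker eC).subtype ≤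
          ((LinearMap.range dD).comap (LinearMap.ker eD).subtype).comap
            (LinearMap.codRestrict (LinearMap.ker eD)
              (f.comp (LinearMap.ker eC).subtype) (fun x => hker x.2)),
        Module.finrank ℝ (LinearMap.range
          (Submodule.mapQ ((LinearMap.range dC).comap (LinearMap.ker eC).subtype)
            ((LinearMap.range dD).comap (LinearMap.ker eD).subtype)
            (LinearMap.codRestrict (LinearMap.ker eD)
              (f.comp (LinearMap.ker eC).subtype) (fun x => hker x.2))
            hcomap)) =
        Module.finrank ℝ (LinearMap.range
          (((LinearMap.ker (dD ∘ₗ LinearMap.adjoint dD + LinearMap.adjoint eD ∘ₗ eD)).subtype ∘ₗ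
              (Submodule.orthogonalProjectionOnto
                (LinearMap.ker (dD ∘ₗ LinearMap.adjoint dD + LinearMap.adjoint eD ∘ₗ eD))).toLinearMap) ∘ₗ
            f ∘ₗ
            ((LinearMap.ker (dC ∘ₗ LinearMap.adjoint dC + LinearMap.adjoint eC ∘ₗ eC)).subtype ∘ₗ
              (Submodule.orthogonalProjectionOnto
                (LinearMap.ker (dC ∘ₗ LinearMap.adjoint dC + LinearMap.adjoint eC ∘ₗ eC))).toLinearMap))) := by
  have hker : LinearMap.ker eC ≤ (LinearMap.ker eD).comap f := fun x hx =>
    LinearMap.mem_ker.mpr <| by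
      rw [← LinearMap.comp_apply, ← hfe, LinearMap.comp_apply, LinearMap.mem_ker.mp hx, map_zero]
  refine ⟨hker, ?_, finrank_range_mapQ_eq_finrank_range_orthogonalProjectionOnto
    (LinearMap.range_le_ker_iff.mpr hC) (LinearMap.range_le_ker_iff.mpr hD)
    (LinearMap.ker_laplacian_s16 dC eC) (LinearMap.ker_laplacian_s16 dD eD) f hker _⟩
  rintro x ⟨y, hy⟩
  exact ⟨f' y, by rw [← LinearMap.comp_apply, ← hfd, LinearMap.comp_apply, hy]; rfl⟩
end

section
/- Let x_0, …, x_n be affinely independent points in ℝ^D and f : ℝ^D → ℝ an affine map with f(x_0) < f(x_1) < ⋯ < f(x_n). Fix 0 ≤ i ≤ n−1 and s with f(x_i) ≤ s < f(x_{i+1}). Set K = conv{x_0, …, x_n} ∩ {x : f(x) ≤ s} and A = conv{x_0, …, x_i}. Then A ⊆ K and A is a deformation retract of K: there is a continuous map H : K × [0,1] → K with H(x,0) = x for all x ∈ K, H(x,1) ∈ A for all x ∈ K, and H(a,t) = a for all a ∈ A and t ∈ [0,1]. -/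
/-!
Extending the vertices to an affine basis gives continuous barycentric coordinates `c j` on the
simplex. A point `y ∈ K` cannot carry all of its weight on the vertices `x j` with `j > i`, for
then `f y ≥ f (x (i+1)) > s`. So the center of mass of the coordinates of `y` restricted to the
face `A` is defined and continuous on `K`; it lies in `A` and fixes `A`, and since `K` is convex
the straight-line homotopy from the identity to this retraction stays inside `K`.
-/

open Set Finset

theorem AffineIndependent.exists_affineMap_apply_eq_ite {k V P ι : Type*} [Field k]
    [AddCommGroup V] [Module k V] [AddTorsor V P] [DecidableEq ι] {x : ι → P}
    (hx : AffineIndependent k x) :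
    ∃ c : ι → P →ᵃ[k] k, ∀ j l, c j (x l) = if j = l then 1 else 0 := by
  classical
  obtain ⟨T, hxT, hTind, hTspan⟩ := exists_subset_affineIndependent_affineSpan_eq_top hx.range
  let b : AffineBasis T k P := ⟨(↑), hTind, by rwa [Subtype.range_coe]⟩
  let xT : ι → T := fun j => ⟨x j, hxT ⟨j, rfl⟩⟩
  refine ⟨fun j => b.coord (xT j), fun j l => ?_⟩
  rw [show x l = b (xT l) from rfl, b.coord_apply]
  simp [xT, hx.injective.eq_iff]

theorem AffineMap.apply_sum_smul_of_sum_eq_one {ι k V W : Type*} [Ring k] [AddCommGroup V]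
    [Module k V] [AddCommGroup W] [Module k W] (f : V →ᵃ[k] W) (s : Finset ι) (w : ι → k)
    (p : ι → V) (hw : ∑ j ∈ s, w j = 1) : f (∑ j ∈ s, w j • p j) = ∑ j ∈ s, w j • f (p j) := by
  rw [← s.affineCombination_eq_linear_combination p w hw, s.map_affineCombination p w hw,
    s.affineCombination_eq_linear_combination _ w hw]
  rfl

section BarycentricCoordinates

variable {ι E : Type*} [DecidableEq ι] [AddCommGroup E] [Module ℝ E]
  {x : ι → E} {c : ι → E →ᵃ[ℝ] ℝ} {y : E}

theorem coord_eq_zero_of_mem_convexHull_image (hc : ∀ j l, c j (x l) = if j = l then 1 else 0)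
    {S : Set ι} {j : ι} (hj : j ∉ S) (hy : y ∈ convexHull ℝ (x '' S)) : c j y = 0 := by
  refine convexHull_min ?_ ((convex_singleton 0).affine_preimage (c j)) hy
  rintro _ ⟨l, hl, rfl⟩
  simp [hc, show j ≠ l by rintro rfl; exact hj hl]

variable [Fintype ι]

theorem coords_mem_stdSimplex (hc : ∀ j l, c j (x l) = if j = l then 1 else 0)
    (hy : y ∈ convexHull ℝ (range x)) : (fun j => c j y) ∈ stdSimplex ℝ ι := by
  refine convexHull_min ?_ ((convex_stdSimplex ℝ ι).affine_preimage (AffineMap.pi c)) hy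
  rintro _ ⟨l, rfl⟩
  change (fun j => c j (x l)) ∈ stdSimplex ℝ ι
  simpa [hc, eq_comm] using ite_eq_mem_stdSimplex ℝ l

theorem sum_coord_smul_eq (hc : ∀ j l, c j (x l) = if j = l then 1 else 0)
    (hy : y ∈ convexHull ℝ (range x)) : ∑ j, c j y • x j = y := by
  refine convexHull_min (t := {y | ∑ j, c j y • x j = y}) ?_ ?_ hy
  · rintro _ ⟨l, rfl⟩
    simp [hc]
  · intro y hy z hz a b _ _ hab
    simp only [mem_ofPred_eq, Convex.combo_affine_apply hab, smul_eq_mul, add_smul, mul_smul,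
      sum_add_distrib, ← smul_sum] at hy hz ⊢
    rw [hy, hz]

theorem apply_eq_sum_coord_mul (hc : ∀ j l, c j (x l) = if j = l then 1 else 0)
    (f : E →ᵃ[ℝ] ℝ) (hy : y ∈ convexHull ℝ (range x)) : f y = ∑ j, c j y * f (x j) := by
  conv_lhs => rw [← sum_coord_smul_eq hc hy]
  exact f.apply_sum_smul_of_sum_eq_one _ _ _ (coords_mem_stdSimplex hc hy).2

theorem centerMass_coords_mem_convexHull (hc : ∀ j l, c j (x l) = if j = l then 1 else 0)
    (S : Finset ι) (hy : y ∈ convexHull ℝ (range x)) (hpos : 0 < ∑ j ∈ S, c j y) :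
    S.centerMass (fun j => c j y) x ∈ convexHull ℝ (x '' S) :=
  S.centerMass_mem_convexHull (fun j _ => (coords_mem_stdSimplex hc hy).1 j) hpos
    fun _ hj => mem_image_of_mem x hj

theorem centerMass_coords_eq_self (hc : ∀ j l, c j (x l) = if j = l then 1 else 0)
    (S : Finset ι) (hy : y ∈ convexHull ℝ (x '' S)) : S.centerMass (fun j => c j y) x = y := by
  have hy' := convexHull_mono (image_subset_range x S) hy
  rw [centerMass_subset x (subset_univ S) fun _ _ hj =>
      coord_eq_zero_of_mem_convexHull_image hc hj hy,
    centerMass_eq_of_sum_1 _ _ (coords_mem_stdSimplex hc hy').2, sum_coord_smul_eq hc hy']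

end BarycentricCoordinates

theorem continuousOn_centerMass {ι X E : Type*} [TopologicalSpace X] [AddCommGroup E]
    [Module ℝ E] [TopologicalSpace E] [ContinuousAdd E] [ContinuousSMul ℝ E] (t : Finset ι)
    {w : ι → X → ℝ} (hw : ∀ j, Continuous (w j)) (z : ι → E) :
    ContinuousOn (fun y => t.centerMass (fun j => w j y) z) {y | ∑ j ∈ t, w j y ≠ 0} := by
  refine ContinuousOn.smul ?_ ?_
  · exact (continuous_finsetSum _ fun j _ => hw j).continuousOn.inv₀ fun y hy => hy
  · exact (continuous_finsetSum _ fun j _ => (hw j).smul continuous_const).continuousOn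

theorem Finset.sum_pos_of_sum_mul_le {ι : Type*} [Fintype ι] (S : Finset ι) {w v : ι → ℝ}
    {s : ℝ} (hw : w ∈ stdSimplex ℝ ι) (hle : ∑ j, w j * v j ≤ s) (hlt : ∀ j ∉ S, s < v j) :
    0 < ∑ j ∈ S, w j := by
  by_contra! h
  have hS : ∀ j ∈ S, w j = 0 :=
    (sum_eq_zero_iff_of_nonneg fun j _ => hw.1 j).1 (le_antisymm h (sum_nonneg fun j _ => hw.1 j))
  obtain ⟨k, -, hk⟩ : ∃ k ∈ univ, (0 : ι → ℝ) k < w k :=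
    exists_lt_of_sum_lt (by simp [hw.2])
  have hpos : 0 < ∑ j, w j * (v j - s) := by
    refine sum_pos' (fun j _ => ?_) ⟨k, mem_univ k, mul_pos hk (sub_pos.2 (hlt k ?_))⟩
    · by_cases hj : j ∈ S
      · simp [hS j hj]
      · exact mul_nonneg (hw.1 j) (sub_pos.2 (hlt j hj)).le
    · exact fun hkS => hk.ne' (hS k hkS)
  have hsum : ∑ j, w j * (v j - s) = ∑ j, w j * v j - s := by
    simp [mul_sub, sum_sub_distrib, ← sum_mul, hw.2]
  linarith

theorem Convex.exists_deformation_retraction {E : Type*} [AddCommGroup E] [Module ℝ E]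
    [TopologicalSpace E] [IsTopologicalAddGroup E] [ContinuousSMul ℝ E] {K A : Set E}
    (hK : Convex ℝ K) (hAK : A ⊆ K) {r : E → E} (hr : ContinuousOn r K) (hrA : MapsTo r K A)
    (hrfix : ∀ a ∈ A, r a = a) :
    ∃ H : K × Icc (0 : ℝ) 1 → K, Continuous H ∧ (∀ p : K, H (p, ⟨0, by norm_num⟩) = p) ∧
      (∀ p : K, (H (p, ⟨1, by norm_num⟩) : E) ∈ A) ∧
      (∀ (p : K) (t : Icc (0 : ℝ) 1), (p : E) ∈ A → H (p, t) = p) := by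
  refine ⟨fun pt => ⟨AffineMap.lineMap (pt.1 : E) (r pt.1) (pt.2 : ℝ),
    hK.lineMap_mem pt.1.2 (hAK (hrA pt.1.2)) pt.2.2⟩, ?_, ?_, ?_, ?_⟩
  · exact (continuous_subtype_val.comp continuous_fst).lineMap
      (hr.comp_continuous (continuous_subtype_val.comp continuous_fst) fun pt => pt.1.2)
      (continuous_subtype_val.comp continuous_snd) |>.subtype_mk _
  · intro p
    simp
  · intro p
    simpa using hrA p.2
  · intro p t hp
    simp [hrfix p hp]

/-- Let `x 0, …, x n` be affinely independent points of `ℝ^D`, `f` an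
affine map with `f (x 0) < ⋯ < f (x n)`, and `f (x i) ≤ s < f (x (i+1))`. Let
`K = conv{x 0, …, x n} ∩ {f ≤ s}` and `A = conv{x 0, …, x i}`. Then `A ⊆ K` and `A`
is a deformation retract of `K`. -/
theorem stmt18 (D n : ℕ) (x : Fin (n + 1) → EuclideanSpace ℝ (Fin D))
    (hind : AffineIndependent ℝ x)
    (f : EuclideanSpace ℝ (Fin D) →ᵃ[ℝ] ℝ)
    (hmono : StrictMono fun j : Fin (n + 1) => f (x j))
    (i : Fin n) (s : ℝ)
    (hs1 : f (x i.castSucc) ≤ s) (hs2 : s < f (x i.succ))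
    (K A : Set (EuclideanSpace ℝ (Fin D)))
    (hK : K = convexHull ℝ (Set.range x) ∩ {y | f y ≤ s})
    (hA : A = convexHull ℝ (x '' {j : Fin (n + 1) | j ≤ i.castSucc})) :
    A ⊆ K ∧
      ∃ H : K × (Set.Icc (0 : ℝ) 1) → K,
        Continuous H ∧
        (∀ p : K, H (p, ⟨0, by norm_num⟩) = p) ∧
        (∀ p : K, (H (p, ⟨1, by norm_num⟩) : EuclideanSpace ℝ (Fin D)) ∈ A) ∧
        (∀ (p : K) (t : Set.Icc (0 : ℝ) 1), (p : EuclideanSpace ℝ (Fin D)) ∈ A →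
          H (p, t) = p) := by
  obtain ⟨c, hc⟩ := hind.exists_affineMap_apply_eq_ite
  set S : Finset (Fin (n + 1)) := Finset.Iic i.castSucc
  have hface : {j | j ≤ i.castSucc} = (S : Set (Fin (n + 1))) := (Finset.coe_Iic _).symm
  rw [hface] at hA
  subst hK hA
  have hAK : convexHull ℝ (x '' S) ⊆ convexHull ℝ (range x) ∩ {y | f y ≤ s} := by
    refine subset_inter (convexHull_mono (image_subset_range _ _))
      (convexHull_min ?_ ((convex_Iic s).affine_preimage f))
    rintro _ ⟨j, hj, rfl⟩
    exact (hmono.monotone (Finset.mem_Iic.1 hj)).trans hs1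
  have hpos : ∀ y ∈ convexHull ℝ (range x) ∩ {y | f y ≤ s}, 0 < ∑ j ∈ S, c j y := by
    rintro y ⟨hy, hys : f y ≤ s⟩
    rw [apply_eq_sum_coord_mul hc f hy] at hys
    refine S.sum_pos_of_sum_mul_le (coords_mem_stdSimplex hc hy) hys
      fun j hj => hs2.trans_le (hmono.monotone ?_)
    simpa [S, Fin.castSucc_lt_iff_succ_le] using hj
  refine ⟨hAK, ((convex_convexHull ℝ _).inter ((convex_Iic s).affine_preimage f))
    |>.exists_deformation_retraction hAK (r := fun y => S.centerMass (c · y) x) ?_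
    (fun y hy => centerMass_coords_mem_convexHull hc S hy.1 (hpos y hy))
    (fun y hy => centerMass_coords_eq_self hc S hy)⟩
  exact (continuousOn_centerMass S (fun j => (c j).continuous_of_finiteDimensional) x).mono
    fun y hy => (hpos y hy).ne'
end

section
/- Let x_0, …, x_{n-1} ∈ ℝ^D, let B = conv{x_0, …, x_{n-1}} be their convex hull, and let x_n ∈ ℝ^D be a point not lying in the affine span of {x_0, …, x_{n-1}} (so that conv(B ∪ {x_n}) is a cone with apex x_n and base B). Let f : ℝ^D → ℝ be an affine map with f(x_j) ≤ f(x_{n-1}) for all 0 ≤ j ≤ n−1 and f(x_{n-1}) < f(x_n). Then for every s with f(x_{n-1}) ≤ s < f(x_n), the base B is a deformation retract of the sublevel set K = conv({x_0,…,x_{n-1},x_n}) ∩ {x : f(x) ≤ s}: there is a continuous map H : K × [0,1] → K with H(x,0) = x for all x ∈ K, H(x,1) ∈ B for all x ∈ K, and H(b,t) = b for all b ∈ B and t ∈ [0,1]. -/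
/-!
Choose an affine function `u` vanishing on the affine span of the base with `u apex = 1`. Every
point `y` of the cone is `lineMap b apex c` with `b` in the base and `c = u y`, and `c ≠ 1` on the
sublevel set because `f apex > s`. Hence the central projection from the apex,
`y ↦ lineMap apex y (1 - u y)⁻¹`, is a continuous retraction of the sublevel set onto the base.
The sublevel set is convex, so the straight-line homotopy from the identity to this retraction
stays inside it.
-/

open Set AffineMap

theorem AffineSubspace.exists_affineMap_eq_zero_of_mem_eq_one_of_notMem {k V : Type*} [Field k]
    [AddCommGroup V] [Module k V] {s : AffineSubspace k V} {p a : V} (hp : p ∈ s) (ha : a ∉ s) :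
    ∃ u : V →ᵃ[k] k, (∀ q ∈ s, u q = 0) ∧ u a = 1 := by
  have hdir : a - p ∉ s.direction := fun h => ha (by simpa using s.vadd_mem_of_mem_direction h hp)
  obtain ⟨φ, hφ, hφs⟩ := Submodule.exists_dual_map_eq_bot_of_notMem hdir inferInstance
  have hu : ∀ q, (((φ (a - p))⁻¹ • φ).toAffineMap - const k V ((φ (a - p))⁻¹ * φ p)) q =
      (φ (a - p))⁻¹ * φ (q - p) := by
    simp [mul_sub]
  refine ⟨((φ (a - p))⁻¹ • φ).toAffineMap - const k V ((φ (a - p))⁻¹ * φ p), fun q hq => ?_, ?_⟩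
  · have hφq : φ (q - p) = 0 := by
      simpa [hφs] using Submodule.mem_map_of_mem (f := φ) (s.vsub_mem_direction hq hp)
    rw [hu, hφq, mul_zero]
  · rw [hu, inv_mul_cancel₀ hφ]

section

variable {E : Type*} [AddCommGroup E] [Module ℝ E]

theorem exists_lineMap_eq_of_mem_convexHull_insert {S : Set E} (hS : S.Nonempty) {a y : E}
    (hy : y ∈ convexHull ℝ (insert a S)) :
    ∃ b ∈ convexHull ℝ S, ∃ c ∈ Icc (0 : ℝ) 1, lineMap b a c = y := by
  rw [convexHull_insert hS, convexJoin_comm, mem_convexJoin] at hy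
  obtain ⟨b, hb, _, rfl, hy⟩ := hy
  rw [segment_eq_image_lineMap] at hy
  obtain ⟨c, hc, rfl⟩ := hy
  exact ⟨b, hb, c, hc, rfl⟩

/-- The projection from `a` onto the hyperplane `u = 0`, when `u a = 1`. -/
noncomputable def centralProjection (a : E) (u : E →ᵃ[ℝ] ℝ) (y : E) : E :=
  lineMap a y (1 - u y)⁻¹

theorem AffineMap.apply_lineMap_eq_of_eq_zero_of_eq_one {a b : E} {u : E →ᵃ[ℝ] ℝ}
    (hb : u b = 0) (ha : u a = 1) (c : ℝ) : u (lineMap b a c) = c := by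
  simp [u.apply_lineMap, hb, ha, lineMap_apply_ring']

theorem centralProjection_lineMap {a b : E} {u : E →ᵃ[ℝ] ℝ} (hb : u b = 0) (ha : u a = 1)
    {c : ℝ} (hc : c ≠ 1) : centralProjection a u (lineMap b a c) = b := by
  rw [centralProjection, u.apply_lineMap_eq_of_eq_zero_of_eq_one hb ha,
    ← lineMap_apply_one_sub a b c, lineMap_lineMap_right,
    inv_mul_cancel₀ (sub_ne_zero.2 (Ne.symm hc)), lineMap_apply_one]

theorem centralProjection_eq_self {a b : E} {u : E →ᵃ[ℝ] ℝ} (hb : u b = 0) :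
    centralProjection a u b = b := by
  simp [centralProjection, hb]

theorem continuousOn_centralProjection [TopologicalSpace E] [IsTopologicalAddGroup E]
    [ContinuousSMul ℝ E] (a : E) {u : E →ᵃ[ℝ] ℝ} (hu : Continuous u) :
    ContinuousOn (centralProjection a u) {y | u y ≠ 1} :=
  continuousOn_const.lineMap continuousOn_id
    ((continuousOn_const.sub hu.continuousOn).inv₀ fun _ hy => sub_ne_zero.2 (Ne.symm hy))

theorem Convex.exists_deformationRetraction_of_retraction [TopologicalSpace E]
    [IsTopologicalAddGroup E] [ContinuousSMul ℝ E] {B K : Set E} (hK : Convex ℝ K) (hBK : B ⊆ K)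
    {r : E → E} (hr : ContinuousOn r K) (hrK : MapsTo r K B) (hrB : ∀ b ∈ B, r b = b) :
    ∃ H : K × (Set.Icc (0 : ℝ) 1) → K,
      Continuous H ∧
      (∀ p : K, H (p, ⟨0, by norm_num⟩) = p) ∧
      (∀ p : K, (H (p, ⟨1, by norm_num⟩) : E) ∈ B) ∧
      (∀ (p : K) (t : Set.Icc (0 : ℝ) 1), (p : E) ∈ B → H (p, t) = p) := by
  refine ⟨fun q => ⟨lineMap q.1.1 (r q.1) (q.2 : ℝ),
    hK.lineMap_mem q.1.2 (hBK (hrK q.1.2)) q.2.2⟩, ?_, fun p => ?_, fun p => ?_, fun p t hp => ?_⟩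
  · have hr' : Continuous fun q : K × Set.Icc (0 : ℝ) 1 => r q.1 :=
      hr.domRestrict.comp continuous_fst
    exact (((continuous_subtype_val.comp continuous_fst).lineMap hr'
      (continuous_subtype_val.comp continuous_snd))).subtype_mk _
  · ext
    simp
  · simpa using hrK p.2
  · ext
    simp [hrB _ hp]

end

section

variable {E : Type*} [NormedAddCommGroup E] [NormedSpace ℝ E] [FiniteDimensional ℝ E]

theorem exists_retraction_convexHull_insert_inter_sublevel {S : Set E} (hS : S.Nonempty) {a : E}
    (ha : a ∉ affineSpan ℝ S) (f : E →ᵃ[ℝ] ℝ) {s : ℝ} (hs : s < f a) :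
    ∃ r : E → E, ContinuousOn r (convexHull ℝ (insert a S) ∩ {y | f y ≤ s}) ∧
      MapsTo r (convexHull ℝ (insert a S) ∩ {y | f y ≤ s}) (convexHull ℝ S) ∧
      ∀ b ∈ convexHull ℝ S, r b = b := by
  obtain ⟨p, hp⟩ := hS
  obtain ⟨u, hu0, hua⟩ :=
    AffineSubspace.exists_affineMap_eq_zero_of_mem_eq_one_of_notMem (subset_affineSpan ℝ S hp) ha
  have huB : ∀ b ∈ convexHull ℝ S, u b = 0 := fun b hb => hu0 b (convexHull_subset_affineSpan S hb)
  have hcone : ∀ y ∈ convexHull ℝ (insert a S) ∩ {y | f y ≤ s},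
      ∃ b ∈ convexHull ℝ S, ∃ c ≠ (1 : ℝ), lineMap b a c = y := by
    rintro y ⟨hy, hfy⟩
    obtain ⟨b, hb, c, -, rfl⟩ := exists_lineMap_eq_of_mem_convexHull_insert ⟨p, hp⟩ hy
    refine ⟨b, hb, c, ?_, rfl⟩
    rintro rfl
    exact hs.not_ge (by simpa using hfy)
  refine ⟨centralProjection a u, ?_, ?_, fun b hb => centralProjection_eq_self (huB b hb)⟩
  · refine (continuousOn_centralProjection a u.continuous_of_finiteDimensional).mono ?_
    intro y hy
    obtain ⟨b, hb, c, hc, rfl⟩ := hcone y hy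
    simpa [u.apply_lineMap_eq_of_eq_zero_of_eq_one (huB b hb) hua] using hc
  · intro y hy
    obtain ⟨b, hb, c, hc, rfl⟩ := hcone y hy
    rwa [centralProjection_lineMap (huB b hb) hua hc]

end

/-- Let `B = conv{x 0, …, x (n-1)}` and let `apex` be a point outside the
affine span of the `x j` (so `conv(B ∪ {apex})` is a cone with apex `apex` and base
`B`). Let `f` be affine with `f (x j) ≤ f (x (n-1))` for all `j` and
`f (x (n-1)) < f apex`. Then for every `s` with `f (x (n-1)) ≤ s < f apex`, the base
`B` is contained in and is a deformation retract of the sublevel set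
`K = conv({x 0, …, x (n-1), apex}) ∩ {f ≤ s}`. -/
theorem stmt19 (D n : ℕ) (hn : 0 < n)
    (x : Fin n → EuclideanSpace ℝ (Fin D)) (apex : EuclideanSpace ℝ (Fin D))
    (hapex : apex ∉ affineSpan ℝ (Set.range x))
    (f : EuclideanSpace ℝ (Fin D) →ᵃ[ℝ] ℝ)
    (hle : ∀ j : Fin n, f (x j) ≤ f (x ⟨n - 1, Nat.sub_lt hn Nat.one_pos⟩))
    (s : ℝ)
    (hs1 : f (x ⟨n - 1, Nat.sub_lt hn Nat.one_pos⟩) ≤ s) (hs2 : s < f apex)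
    (B K : Set (EuclideanSpace ℝ (Fin D)))
    (hB : B = convexHull ℝ (Set.range x))
    (hK : K = convexHull ℝ (Set.range x ∪ {apex}) ∩ {y | f y ≤ s}) :
    B ⊆ K ∧
      ∃ H : K × (Set.Icc (0 : ℝ) 1) → K,
        Continuous H ∧
        (∀ p : K, H (p, ⟨0, by norm_num⟩) = p) ∧
        (∀ p : K, (H (p, ⟨1, by norm_num⟩) : EuclideanSpace ℝ (Fin D)) ∈ B) ∧
        (∀ (p : K) (t : Set.Icc (0 : ℝ) 1), (p : EuclideanSpace ℝ (Fin D)) ∈ B →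
          H (p, t) = p) := by
  subst hB hK
  rw [union_singleton]
  have hsublevel : Convex ℝ {y | f y ≤ s} := (convex_Iic s).affine_preimage f
  have hBK : convexHull ℝ (range x) ⊆ convexHull ℝ (insert apex (range x)) ∩ {y | f y ≤ s} :=
    subset_inter (convexHull_mono (subset_insert _ _))
      (convexHull_min (by rintro _ ⟨j, rfl⟩; exact (hle j).trans hs1) hsublevel)
  have : Nonempty (Fin n) := ⟨⟨0, hn⟩⟩
  obtain ⟨r, hr, hrK, hrB⟩ :=
    exists_retraction_convexHull_insert_inter_sublevel (range_nonempty x) hapex f hs2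
  exact ⟨hBK, ((convex_convexHull ℝ _).inter hsublevel).exists_deformationRetraction_of_retraction
    hBK hr hrK hrB⟩
end
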